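/- arXiv:2507.06757 — 5 statements merged into one kernel-verified Lean document; each statement's English description precedes it below -/
import Mathlib

section
/- Let v₁,…,v_d ∈ ℝ^D be linearly independent and for x ∈ ℝ^d let L_x = { n ∈ ℤ^D : v_k·n + x_k ≥ 0 for all k }. If (x(j)) is a sequence in ℝ^d such that for each k the sequence (x_k(j)) is either (i) non-increasing and convergent to x_k, (ii) strictly increasing and convergent to x_k, or (iii) increasing to +∞, then L_{x(j)} converges in the Fell topology (pointwise convergence of characteristic functions) to the set of all n ∈ ℤ^D satisfying v_k·n + x_k ≥ 0 for all k of type (i) and v_k·n + x_k > 0 for all k of type (ii) (no condition for k of type (iii)). -/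
/-!
Fix `n ∈ ℤ^D` and read the `k`-th constraint as the threshold condition `-v_k·n ≤ x_k(j)`.
If `x_k(j)` is non-increasing with limit `x_k`, it never drops below the limit, so the
condition eventually holds iff `-v_k·n ≤ x_k`. If it increases strictly to `x_k`, it always
lies strictly below the limit, so the condition eventually holds iff `-v_k·n < x_k`. If it
tends to `+∞`, the condition eventually holds. With finitely many `k`, membership of `n` in
`L_{x(j)}` eventually stabilizes.
-/

open Filter
open scoped BigOperators

/-- `v · n` for `v ∈ ℝ^D` and `n ∈ ℤ^D`. -/
def dotZ {D : ℕ} (v : Fin D → ℝ) (n : Fin D → ℤ) : ℝ := ∑ i, v i * (n i : ℝ)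

/-- Characteristic function of a set, with values in `Bool`. -/
noncomputable def chi {α : Type*} (M : Set α) : α → Bool :=
  fun x => @decide (x ∈ M) (Classical.propDecidable _)

open Topology

theorem tendsto_chi_iff {α ι : Type*} {l : Filter ι} {M : ι → Set α} {N : Set α} :
    Tendsto (fun i => chi (M i)) l (𝓝 (chi N)) ↔ ∀ a, ∀ᶠ i in l, a ∈ M i ↔ a ∈ N := by
  simp only [tendsto_pi_nhds, nhds_discrete, tendsto_pure, chi, decide_eq_decide]

section Threshold

variable {α β : Type*} [LinearOrder α] [TopologicalSpace α] [OrderClosedTopology α]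
  [PartialOrder β] [IsDirectedOrder β] {f : β → α} {a : α}

theorem Antitone.eventually_le_iff_of_tendsto (hf : Antitone f) (hlim : Tendsto f atTop (𝓝 a))
    (t : α) : ∀ᶠ j in atTop, t ≤ f j ↔ t ≤ a := by
  rcases le_or_gt t a with hta | hat
  · exact .of_forall fun j => iff_of_true (hta.trans (hf.le_of_tendsto hlim j)) hta
  · filter_upwards [hlim.eventually_lt_const hat] with j hj
    exact iff_of_false hj.not_ge hat.not_ge

theorem StrictMono.eventually_le_iff_of_tendsto [NoMaxOrder β] (hf : StrictMono f)
    (hlim : Tendsto f atTop (𝓝 a)) (t : α) : ∀ᶠ j in atTop, t ≤ f j ↔ t < a := by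
  have hlt : ∀ j, f j < a := fun j =>
    (exists_gt j).elim fun k hjk => (hf hjk).trans_le (hf.monotone.ge_of_tendsto hlim k)
  rcases lt_or_ge t a with hta | hat
  · filter_upwards [hlim.eventually_const_lt hta] with j hj
    exact iff_of_true hj.le hta
  · exact .of_forall fun j => iff_of_false ((hlt j).trans_le hat).not_ge hat.not_gt

theorem eventually_le_iff_of_antitone_strictMono_atTop [NoMaxOrder β] {P M I : Prop}
    (hcover : P ∨ M ∨ I) (hp : P → Antitone f ∧ Tendsto f atTop (𝓝 a))
    (hm : M → StrictMono f ∧ Tendsto f atTop (𝓝 a)) (hi : I → Tendsto f atTop atTop) (t : α) :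
    ∀ᶠ j in atTop, t ≤ f j ↔ (P → t ≤ a) ∧ (M → t < a) := by
  have hP := eventually_imp_distrib_left.2 fun h => (hp h).1.eventually_le_iff_of_tendsto (hp h).2 t
  have hM := eventually_imp_distrib_left.2 fun h => (hm h).1.eventually_le_iff_of_tendsto (hm h).2 t
  have hI := eventually_imp_distrib_left.2 fun h => (hi h).eventually_ge_atTop t
  filter_upwards [hP, hM, hI] with j hP hM hI
  tauto

end Threshold

theorem statement3_general (D d : ℕ) (v : Fin d → Fin D → ℝ)
    (x : ℕ → Fin d → ℝ) (xl : Fin d → ℝ)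
    (Jp Jm Jinf : Set (Fin d))
    (hcover : Jp ∪ Jm ∪ Jinf = Set.univ)
    (hp : ∀ k ∈ Jp, Antitone (fun j => x j k) ∧
      Tendsto (fun j => x j k) atTop (nhds (xl k)))
    (hm : ∀ k ∈ Jm, StrictMono (fun j => x j k) ∧
      Tendsto (fun j => x j k) atTop (nhds (xl k)))
    (hi : ∀ k ∈ Jinf, Monotone (fun j => x j k) ∧
      Tendsto (fun j => x j k) atTop atTop) :
    Tendsto
      (fun j => chi {n : Fin D → ℤ | ∀ k, 0 ≤ dotZ (v k) n + x j k})
      atTop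
      (nhds (chi {n : Fin D → ℤ |
        (∀ k ∈ Jp, 0 ≤ dotZ (v k) n + xl k) ∧
        (∀ k ∈ Jm, 0 < dotZ (v k) n + xl k)})) := by
  refine tendsto_chi_iff.2 fun n => ?_
  have hcoord : ∀ k, ∀ᶠ j in atTop, -dotZ (v k) n ≤ x j k ↔
      (k ∈ Jp → -dotZ (v k) n ≤ xl k) ∧ (k ∈ Jm → -dotZ (v k) n < xl k) := fun k =>
    have hk : k ∈ Jp ∨ k ∈ Jm ∨ k ∈ Jinf := by
      simpa only [Set.mem_union, or_assoc] using hcover.ge (Set.mem_univ k)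
    eventually_le_iff_of_antitone_strictMono_atTop hk (hp k) (hm k) (fun h => (hi k h).2) _
  filter_upwards [eventually_all.2 hcoord] with j hj
  simp only [← neg_le_iff_add_nonneg', ← neg_lt_iff_pos_add', hj, forall_and]

/-- the convergence criterion for the half-space intersections
`L_x = {n ∈ ℤ^D : v_k·n + x_k ≥ 0 ∀k}` in the Fell topology, for a sequence
`x(j)` whose components are non-increasing to a limit (J₊), strictly increasing
to a limit (J₋), or increasing to +∞ (J_∞). -/
theorem statement3 (D d : ℕ) (v : Fin d → Fin D → ℝ)
    (hv : LinearIndependent ℝ v)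
    (x : ℕ → Fin d → ℝ) (xl : Fin d → ℝ)
    (Jp Jm Jinf : Set (Fin d))
    (hcover : Jp ∪ Jm ∪ Jinf = Set.univ)
    (hp : ∀ k ∈ Jp, Antitone (fun j => x j k) ∧
      Tendsto (fun j => x j k) atTop (nhds (xl k)))
    (hm : ∀ k ∈ Jm, StrictMono (fun j => x j k) ∧
      Tendsto (fun j => x j k) atTop (nhds (xl k)))
    (hi : ∀ k ∈ Jinf, Monotone (fun j => x j k) ∧
      Tendsto (fun j => x j k) atTop atTop) :
    Tendsto
      (fun j => chi {n : Fin D → ℤ | ∀ k, 0 ≤ dotZ (v k) n + x j k})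
      atTop
      (nhds (chi {n : Fin D → ℤ |
        (∀ k ∈ Jp, 0 ≤ dotZ (v k) n + xl k) ∧
        (∀ k ∈ Jm, 0 < dotZ (v k) n + xl k)})) :=
  statement3_general D d v x xl Jp Jm Jinf hcover hp hm hi
end

section
/- Let v₁,…,v_d ∈ ℝ^D (d ≤ D) be such that the image A_v(ℤ^D) of ℤ^D under the linear map A_v(z) = (v₁·z,…,v_d·z) is dense in ℝ^d. Define Γ on the collection of sets of the form L^J_{v,x} = { n ∈ ℤ^D : v_k·n + x_k > 0 for k ∈ J, v_k·n + x_k ≥ 0 for k ∉ J } (x ∈ ℝ^d₊, J ⊆ {1,…,d}) by Γ(S)_k = −inf{ v_k·n : n ∈ S }. Then Γ(L^J_{v,x}) = x for every J and every x ∈ ℝ^d₊. -/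
/-! The defining inequalities of `L^J_{v,x}` bound `v_k·n` below by `-x_k`; density of
`A_v(ℤ^D)` yields lattice points whose image lies in a small cube just above `-x`,
so these points belong to `L^J_{v,x}` for every `J` and the bound is attained in the limit. -/

open scoped BigOperators

/-- The set `L^J_{v,x} = {n ∈ ℤ^D : v_k·n + x_k > 0 for k ∈ J,
v_k·n + x_k ≥ 0 for k ∉ J}`. -/
def LJ {D d : ℕ} (v : Fin d → Fin D → ℝ) (x : Fin d → ℝ) (J : Set (Fin d)) :
    Set (Fin D → ℤ) :=
  {n | (∀ k ∈ J, 0 < dotZ (v k) n + x k) ∧ (∀ k ∉ J, 0 ≤ dotZ (v k) n + x k)}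

section LJ

variable {D d : ℕ} {v : Fin d → Fin D → ℝ} {x : Fin d → ℝ} {J : Set (Fin d)}

theorem neg_le_dotZ_of_mem_LJ {n : Fin D → ℤ} (hn : n ∈ LJ v x J) (k : Fin d) :
    -x k ≤ dotZ (v k) n := by
  by_cases hk : k ∈ J
  · linarith [hn.1 k hk]
  · linarith [hn.2 k hk]

theorem mem_LJ_of_forall_neg_lt {n : Fin D → ℤ} (hn : ∀ k, -x k < dotZ (v k) n) :
    n ∈ LJ v x J :=
  ⟨fun k _ => by linarith [hn k], fun k _ => by linarith [hn k]⟩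

theorem exists_mem_LJ_dotZ_lt
    (hdense : Dense (Set.range fun n : Fin D → ℤ => fun k => dotZ (v k) n))
    (k : Fin d) {ε : ℝ} (hε : 0 < ε) :
    ∃ n ∈ LJ v x J, dotZ (v k) n < -x k + ε := by
  obtain ⟨_, ⟨n, rfl⟩, hdist⟩ :=
    hdense.exists_dist_lt (fun j => -x j + ε / 2) (half_pos hε)
  have hclose : ∀ j, |(-x j + ε / 2) - dotZ (v j) n| < ε / 2 :=
    (dist_pi_lt_iff (half_pos hε)).mp hdist
  refine ⟨n, mem_LJ_of_forall_neg_lt fun j => ?_, ?_⟩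
  · linarith [(abs_lt.mp (hclose j)).2]
  · linarith [(abs_lt.mp (hclose k)).1]

end LJ

theorem statement6_general (D d : ℕ) (v : Fin d → Fin D → ℝ)
    (hdense : Dense (Set.range fun n : Fin D → ℤ => fun k => dotZ (v k) n))
    (J : Set (Fin d)) (x : Fin d → ℝ) (k : Fin d) :
    sInf { r : ℝ | ∃ n ∈ LJ v x J, r = dotZ (v k) n } = -x k := by
  have hnonempty : { r : ℝ | ∃ n ∈ LJ v x J, r = dotZ (v k) n }.Nonempty := by
    obtain ⟨n, hn, -⟩ := exists_mem_LJ_dotZ_lt (J := J) hdense k one_pos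
    exact ⟨_, n, hn, rfl⟩
  refine csInf_eq_of_forall_ge_of_forall_gt_exists_lt hnonempty ?_ fun w hw => ?_
  · rintro _ ⟨n, hn, rfl⟩
    exact neg_le_dotZ_of_mem_LJ hn k
  · obtain ⟨n, hn, hlt⟩ := exists_mem_LJ_dotZ_lt (J := J) hdense k (sub_pos.mpr hw)
    exact ⟨_, ⟨n, hn, rfl⟩, by linarith⟩

/-- if `A_v(ℤ^D)` is dense in `ℝ^d`, then for every `J` and
`x ∈ ℝ^d₊` one has `Γ(L^J_{v,x})_k = x_k`, i.e.
`inf { v_k·n : n ∈ L^J_{v,x} } = −x_k`. -/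
theorem statement6 (D d : ℕ) (v : Fin d → Fin D → ℝ)
    (hdense : Dense (Set.range fun n : Fin D → ℤ => fun k => dotZ (v k) n))
    (J : Set (Fin d)) (x : Fin d → ℝ) (hx : ∀ k, 0 ≤ x k) (k : Fin d) :
    sInf { r : ℝ | ∃ n ∈ LJ v x J, r = dotZ (v k) n } = -x k :=
  statement6_general D d v hdense J x k
end

section
/- Let v₁,…,v_d ∈ ℝ^D with A_v(ℤ^D) dense in ℝ^d. Suppose a sequence of sets L^{J(j)}_{v,x(j)} (with x(j) ∈ ℝ^d₊) converges in the Fell topology to L^J_{v,x} with x ∈ ℝ^d₊. Then x(j) → x in ℝ^d. -/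
/-!
Fell convergence means that every lattice point `n` eventually lies in `L^{J(j)}_{v,x(j)}`
exactly when it lies in `L^J_{v,x}`. By density of `A_v(ℤ^D)` the affine values
`v_k · n + x_k` can be prescribed up to any error. A point `n` with all `v_k · n + xl_k` in
`(0, ε)` belongs to the limit set, so eventually `v_k · n + x(j)_k ≥ 0`, i.e.
`x(j)_k > xl_k - ε`. A point with `v_k · n + xl_k ∈ (-ε, 0)` and the other coordinates
comfortably positive lies outside the limit set, so eventually outside `L^{J(j)}_{v,x(j)}`;
given the lower bounds this forces `v_k · n + x(j)_k ≤ 0`, i.e. `x(j)_k < xl_k + ε`.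
-/

open Filter
open scoped BigOperators

theorem eventually_mem_iff_of_tendsto_chi {α ι : Type*} {l : Filter ι} {S : ι → Set α}
    {T : Set α} (h : Tendsto (fun j => chi (S j)) l (nhds (chi T))) (a : α) :
    ∀ᶠ j in l, a ∈ S j ↔ a ∈ T := by
  have ha := tendsto_pi_nhds.mp h a
  rw [nhds_discrete, tendsto_pure] at ha
  filter_upwards [ha] with j hj
  simpa only [chi, decide_eq_decide] using hj

theorem DenseRange.exists_forall_abs_sub_lt {ι β : Type*} [Fintype ι] {f : β → ι → ℝ}
    (hf : DenseRange f) (t : ι → ℝ) {δ : ℝ} (hδ : 0 < δ) :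
    ∃ b, ∀ i, |f b i - t i| < δ := by
  obtain ⟨b, hb⟩ := hf.exists_dist_lt t hδ
  exact ⟨b, fun i => by
    simpa only [Real.dist_eq, abs_sub_comm] using (dist_pi_lt_iff hδ).mp hb i⟩

section LJ

variable {D d : ℕ} {v : Fin d → Fin D → ℝ} {x : Fin d → ℝ} {J : Set (Fin d)} {n : Fin D → ℤ}

theorem mem_LJ_of_forall_pos (h : ∀ k, 0 < dotZ (v k) n + x k) : n ∈ LJ v x J :=
  ⟨fun k _ => h k, fun k _ => (h k).le⟩

theorem nonneg_of_mem_LJ (h : n ∈ LJ v x J) (k : Fin d) : 0 ≤ dotZ (v k) n + x k := by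
  by_cases hk : k ∈ J
  · exact (h.1 k hk).le
  · exact h.2 k hk

theorem exists_forall_abs_dotZ_add_sub_lt
    (hdense : DenseRange fun (n : Fin D → ℤ) k => dotZ (v k) n) (x s : Fin d → ℝ) {δ : ℝ}
    (hδ : 0 < δ) : ∃ n, ∀ k, |dotZ (v k) n + x k - s k| < δ := by
  obtain ⟨n, hn⟩ := hdense.exists_forall_abs_sub_lt (s - x) hδ
  exact ⟨n, fun k => by simpa only [Pi.sub_apply, sub_sub_eq_add_sub] using hn k⟩

variable {ι : Type*} {l : Filter ι} {x : ι → Fin d → ℝ} {J : ι → Set (Fin d)}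
  {xl : Fin d → ℝ} {Jl : Set (Fin d)}

theorem eventually_forall_sub_lt_of_eventually_mem_LJ_iff
    (hdense : DenseRange fun (n : Fin D → ℤ) k => dotZ (v k) n)
    (hmem : ∀ n, ∀ᶠ j in l, n ∈ LJ v (x j) (J j) ↔ n ∈ LJ v xl Jl) {ε : ℝ} (hε : 0 < ε) :
    ∀ᶠ j in l, ∀ k, xl k - ε < x j k := by
  obtain ⟨n, hn⟩ := exists_forall_abs_dotZ_add_sub_lt hdense xl (fun _ => ε / 2) (half_pos hε)
  have hn_mem : n ∈ LJ v xl Jl := mem_LJ_of_forall_pos fun k => by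
    linarith [(abs_sub_lt_iff.mp (hn k)).2]
  filter_upwards [hmem n] with j hj k
  linarith [nonneg_of_mem_LJ (hj.mpr hn_mem) k, (abs_sub_lt_iff.mp (hn k)).1]

theorem eventually_lt_add_of_eventually_mem_LJ_iff
    (hdense : DenseRange fun (n : Fin D → ℤ) k => dotZ (v k) n)
    (hmem : ∀ n, ∀ᶠ j in l, n ∈ LJ v (x j) (J j) ↔ n ∈ LJ v xl Jl) {ε : ℝ} (hε : 0 < ε)
    (k : Fin d) : ∀ᶠ j in l, x j k < xl k + ε := by
  obtain ⟨n, hn⟩ := exists_forall_abs_dotZ_add_sub_lt hdense xl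
    (fun i => if i = k then -(ε / 2) else ε) (half_pos hε)
  have hk : -ε < dotZ (v k) n + xl k ∧ dotZ (v k) n + xl k < 0 := by
    have := abs_sub_lt_iff.mp (hn k)
    rw [if_pos rfl] at this
    constructor <;> linarith
  have hi : ∀ i, i ≠ k → ε / 2 < dotZ (v i) n + xl i := fun i hik => by
    have := abs_sub_lt_iff.mp (hn i)
    simp only [if_neg hik] at this
    linarith
  have hn_not_mem : n ∉ LJ v xl Jl := fun h => by
    linarith [nonneg_of_mem_LJ h k, hk.2]
  filter_upwards [hmem n, eventually_forall_sub_lt_of_eventually_mem_LJ_iff hdense hmem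
    (half_pos hε)] with j hj hlow
  have hk_nonpos : dotZ (v k) n + x j k ≤ 0 := by
    by_contra! hpos
    refine hn_not_mem (hj.mp (mem_LJ_of_forall_pos fun i => ?_))
    by_cases hik : i = k
    · exact hik ▸ hpos
    · linarith [hi i hik, hlow i]
  linarith [hk.1]

end LJ

theorem statement7_general (D d : ℕ) (v : Fin d → Fin D → ℝ)
    (hdense : Dense (Set.range fun n : Fin D → ℤ => fun k => dotZ (v k) n))
    (x : ℕ → Fin d → ℝ) (J : ℕ → Set (Fin d))
    (xl : Fin d → ℝ) (Jl : Set (Fin d))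
    (hconv : Tendsto (fun j => chi (LJ v (x j) (J j))) atTop
      (nhds (chi (LJ v xl Jl)))) :
    Tendsto x atTop (nhds xl) := by
  have hmem := eventually_mem_iff_of_tendsto_chi hconv
  refine tendsto_pi_nhds.mpr fun k => tendsto_order.mpr ⟨fun a ha => ?_, fun a ha => ?_⟩
  · filter_upwards [eventually_forall_sub_lt_of_eventually_mem_LJ_iff hdense hmem
      (sub_pos.mpr ha)] with j hj
    simpa using hj k
  · filter_upwards [eventually_lt_add_of_eventually_mem_LJ_iff hdense hmem
      (sub_pos.mpr ha) k] with j hj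
    simpa using hj

/-- if `A_v(ℤ^D)` is dense in `ℝ^d` and `L^{J(j)}_{v,x(j)}`
converges in the Fell topology (pointwise convergence of characteristic
functions) to `L^J_{v,x}` with all `x(j), x ∈ ℝ^d₊`, then `x(j) → x`. -/
theorem statement7 (D d : ℕ) (v : Fin d → Fin D → ℝ)
    (hdense : Dense (Set.range fun n : Fin D → ℤ => fun k => dotZ (v k) n))
    (x : ℕ → Fin d → ℝ) (J : ℕ → Set (Fin d))
    (xl : Fin d → ℝ) (Jl : Set (Fin d))
    (hx : ∀ j k, 0 ≤ x j k) (hxl : ∀ k, 0 ≤ xl k)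
    (hconv : Tendsto (fun j => chi (LJ v (x j) (J j))) atTop
      (nhds (chi (LJ v xl Jl)))) :
    Tendsto x atTop (nhds xl) :=
  statement7_general D d v hdense x J xl Jl hconv
end

section
/- Let v₁,…,v_d ∈ ℝ^D span a subspace E whose orthogonal complement meets ℤ^D in a lattice, and assume A_{v∖i}(ℤ^D) has rank structure so that the integer kernel of A_{v∖i} (the map omitting row i) has ℤ-rank one more than the integer kernel of A_v. Then there exists a nonzero n ∈ ℤ^D with v_k·n = 0 for all k ≠ i and v_i·n > 0; consequently the sequence n(j) = j·n lies in L_v, satisfies v_k·n(j) = 0 for all k ≠ i, and v_i·n(j) → +∞. -/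
/-! If every integer vector orthogonal to all `v_k`, `k ≠ i`, were also orthogonal to `v_i`, the two
integer kernels would be the same set and their spans could not differ in dimension. So some integer
`m` has `v_k · m = 0` for `k ≠ i` and `v_i · m ≠ 0`; after a sign change `v_i · n > 0`, and the
multiples `j • n` grow linearly along `v_i` while staying orthogonal to the other `v_k`. -/

open Filter
open scoped BigOperators

/-- Embedding `ℤ^D → ℝ^D`. -/
def castZ {D : ℕ} (n : Fin D → ℤ) : Fin D → ℝ := fun i => (n i : ℝ)

section dotZ

variable {D : ℕ}

theorem dotZ_smul (w : Fin D → ℝ) (c : ℤ) (n : Fin D → ℤ) :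
    dotZ w (c • n) = c * dotZ w n := by
  simp only [dotZ, Finset.mul_sum, Pi.smul_apply, smul_eq_mul, Int.cast_mul]
  exact Finset.sum_congr rfl fun _ _ => by ring

theorem dotZ_neg (w : Fin D → ℝ) (n : Fin D → ℤ) : dotZ w (-n) = -dotZ w n := by
  simpa using dotZ_smul w (-1) n

@[simp]
theorem dotZ_zero (w : Fin D → ℝ) : dotZ w 0 = 0 := by
  simp [dotZ]

end dotZ

theorem exists_dotZ_ne_zero_of_finrank_ne {D d : ℕ} (v : Fin d → Fin D → ℝ) (i : Fin d)
    (hrank :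
      Module.finrank ℝ (Submodule.span ℝ
        {x : Fin D → ℝ | ∃ n : Fin D → ℤ, x = castZ n ∧ ∀ k, k ≠ i → dotZ (v k) n = 0}) ≠
      Module.finrank ℝ (Submodule.span ℝ
        {x : Fin D → ℝ | ∃ n : Fin D → ℤ, x = castZ n ∧ ∀ k, dotZ (v k) n = 0})) :
    ∃ n : Fin D → ℤ, (∀ k, k ≠ i → dotZ (v k) n = 0) ∧ dotZ (v i) n ≠ 0 := by
  by_contra! h
  refine hrank (congrArg (fun s => Module.finrank ℝ (Submodule.span ℝ s)) ?_)
  ext x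
  constructor
  · rintro ⟨n, rfl, hn⟩
    refine ⟨n, rfl, fun k => ?_⟩
    rcases eq_or_ne k i with rfl | hk
    exacts [h n hn, hn k hk]
  · rintro ⟨n, rfl, hn⟩
    exact ⟨n, rfl, fun k _ => hn k⟩

theorem exists_dotZ_pos_of_dotZ_ne_zero {D d : ℕ} {v : Fin d → Fin D → ℝ} {i : Fin d}
    {m : Fin D → ℤ} (hm : ∀ k, k ≠ i → dotZ (v k) m = 0) (hmi : dotZ (v i) m ≠ 0) :
    ∃ n : Fin D → ℤ, (∀ k, k ≠ i → dotZ (v k) n = 0) ∧ 0 < dotZ (v i) n := by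
  rcases hmi.lt_or_gt with hneg | hpos
  · exact ⟨-m, fun k hk => by rw [dotZ_neg, hm k hk, neg_zero], by rw [dotZ_neg]; linarith⟩
  · exact ⟨m, hm, hpos⟩

theorem tendsto_dotZ_natCast_smul_atTop {D : ℕ} {w : Fin D → ℝ} {n : Fin D → ℤ}
    (hn : 0 < dotZ w n) : Tendsto (fun j : ℕ => dotZ w ((j : ℤ) • n)) atTop atTop := by
  simp only [dotZ_smul, Int.cast_natCast]
  exact tendsto_natCast_atTop_atTop.atTop_mul_const hn

theorem statement10_general (D d : ℕ) (v : Fin d → Fin D → ℝ)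
    (i : Fin d)
    (hrank :
      Module.finrank ℝ (Submodule.span ℝ
        {x : Fin D → ℝ | ∃ n : Fin D → ℤ, x = castZ n ∧
          ∀ k, k ≠ i → dotZ (v k) n = 0}) =
      Module.finrank ℝ (Submodule.span ℝ
        {x : Fin D → ℝ | ∃ n : Fin D → ℤ, x = castZ n ∧
          ∀ k, dotZ (v k) n = 0}) + 1) :
    ∃ n : Fin D → ℤ, n ≠ 0 ∧ (∀ k, k ≠ i → dotZ (v k) n = 0) ∧
      0 < dotZ (v i) n ∧
      (∀ j : ℕ, ∀ k, 0 ≤ dotZ (v k) ((j : ℤ) • n)) ∧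
      (∀ j : ℕ, ∀ k, k ≠ i → dotZ (v k) ((j : ℤ) • n) = 0) ∧
      Tendsto (fun j : ℕ => dotZ (v i) ((j : ℤ) • n)) atTop atTop := by
  obtain ⟨m, hm, hmi⟩ := exists_dotZ_ne_zero_of_finrank_ne v i (by omega)
  obtain ⟨n, hn, hni⟩ := exists_dotZ_pos_of_dotZ_ne_zero hm hmi
  have hmultiple : ∀ (j : ℕ) k, k ≠ i → dotZ (v k) ((j : ℤ) • n) = 0 := fun j k hk => by
    rw [dotZ_smul, hn k hk, mul_zero]
  refine ⟨n, ?_, hn, hni, fun j k => ?_, hmultiple, tendsto_dotZ_natCast_smul_atTop hni⟩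
  · rintro rfl
    simp at hni
  · rcases eq_or_ne k i with rfl | hk
    · rw [dotZ_smul]
      positivity
    · exact (hmultiple j k hk).ge

/-- in the rational case, if the integer kernel of `A_{v∖i}`
has rank one more than the integer kernel of `A_v` (measured via the dimension
of their real spans), then there is a nonzero `n ∈ ℤ^D` with `v_k·n = 0` for
`k ≠ i` and `v_i·n > 0`; the sequence `n(j) = j·n` then lies in `L_v`,
satisfies `v_k·n(j) = 0` for `k ≠ i` and `v_i·n(j) → +∞`. -/
theorem statement10 (D d : ℕ) (v : Fin d → Fin D → ℝ)
    (hv : LinearIndependent ℝ v) (i : Fin d)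
    (hrank :
      Module.finrank ℝ (Submodule.span ℝ
        {x : Fin D → ℝ | ∃ n : Fin D → ℤ, x = castZ n ∧
          ∀ k, k ≠ i → dotZ (v k) n = 0}) =
      Module.finrank ℝ (Submodule.span ℝ
        {x : Fin D → ℝ | ∃ n : Fin D → ℤ, x = castZ n ∧
          ∀ k, dotZ (v k) n = 0}) + 1) :
    ∃ n : Fin D → ℤ, n ≠ 0 ∧ (∀ k, k ≠ i → dotZ (v k) n = 0) ∧
      0 < dotZ (v i) n ∧
      (∀ j : ℕ, ∀ k, 0 ≤ dotZ (v k) ((j : ℤ) • n)) ∧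
      (∀ j : ℕ, ∀ k, k ≠ i → dotZ (v k) ((j : ℤ) • n) = 0) ∧
      Tendsto (fun j : ℕ => dotZ (v i) ((j : ℤ) • n)) atTop atTop :=
  statement10_general D d v i hrank
end

section
/- Let Γ : X → Y be a continuous map between topological spaces, with X a Polish space and Y = ℝ^d₊, and suppose there is a Borel set N ⊆ Y of measure zero (for a given Radon measure ν on Y absolutely continuous w.r.t. Lebesgue) such that Γ restricted to X ∖ Γ^{-1}(N) is injective and Γ is proper. Then A ↦ ν(Γ(A)) defines a countably additive Borel measure on X which is a Radon measure. -/
/-!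
Restricted to the complement `S` of `Γ⁻¹(N)`, the map `Γ` is a continuous injection of a Borel
subset of a Polish space, hence a measurable embedding (Lusin–Souslin); so `ν` pulls back along
`Γ|_S` to a measure `A ↦ ν(Γ(A ∩ S))` on `X`, which agrees with `A ↦ ν(Γ(A))` because `Γ(Sᶜ) ⊆ N`
is `ν`-null. It is locally finite since `Γ⁻¹(U)` has measure at most `ν(U)`, and properness makes
`X` σ-compact, so local finiteness upgrades to regularity.
-/

open MeasureTheory Set

namespace MeasureTheory.Measure

variable {X Y : Type*} [MeasurableSpace X] [MeasurableSpace Y]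

noncomputable def comapOn (f : X → Y) (s : Set X) (ν : Measure Y) : Measure X :=
  (ν.comap (s.domRestrict f)).map (↑)

section Polish

variable [TopologicalSpace X] [PolishSpace X] [BorelSpace X]
  [TopologicalSpace Y] [T2Space Y] [BorelSpace Y]
  {f : X → Y} {s : Set X} {ν : Measure Y}

theorem comapOn_apply (hs : MeasurableSet s) (hf : ContinuousOn f s) (hinj : InjOn f s)
    (A : Set X) : ν.comapOn f s A = ν (f '' (A ∩ s)) := by
  rw [comapOn, MeasurableEmbedding.map_apply (MeasurableEmbedding.subtype_coe hs),
    (hf.measurableEmbedding hs hinj).comap_apply, image_domRestrict]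

theorem comapOn_apply_eq_image (hs : MeasurableSet s) (hf : ContinuousOn f s)
    (hinj : InjOn f s) (hnull : ν (f '' sᶜ) = 0) (A : Set X) :
    ν.comapOn f s A = ν (f '' A) := by
  rw [comapOn_apply hs hf hinj]
  refine le_antisymm (measure_mono (image_mono inter_subset_left)) ?_
  calc ν (f '' A) = ν (f '' A \ f '' sᶜ) := (measure_sdiff_null hnull).symm
    _ ≤ ν (f '' (A ∩ s)) := by
      refine measure_mono ?_
      rintro _ ⟨⟨a, ha, rfl⟩, hnot⟩
      exact ⟨a, ⟨ha, not_not.1 fun has => hnot ⟨a, has, rfl⟩⟩, rfl⟩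

theorem isLocallyFiniteMeasure_comapOn [IsLocallyFiniteMeasure ν] (hs : MeasurableSet s)
    (hf : Continuous f) (hinj : InjOn f s) : IsLocallyFiniteMeasure (ν.comapOn f s) := by
  refine ⟨fun x => ?_⟩
  obtain ⟨U, hxU, hU, hνU⟩ := ν.exists_isOpen_measure_lt_top (f x)
  refine ⟨f ⁻¹' U, (hU.preimage hf).mem_nhds hxU, ?_⟩
  calc ν.comapOn f s (f ⁻¹' U) = ν (f '' (f ⁻¹' U ∩ s)) :=
        comapOn_apply hs hf.continuousOn hinj _
    _ ≤ ν U := measure_mono ((image_mono inter_subset_left).trans (image_preimage_subset f U))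
    _ < ⊤ := hνU

end Polish

end MeasureTheory.Measure

theorem SigmaCompactSpace.of_isCompact_preimage {X Y : Type*} [TopologicalSpace X]
    [TopologicalSpace Y] [SigmaCompactSpace Y] {f : X → Y}
    (hf : ∀ K : Set Y, IsCompact K → IsCompact (f ⁻¹' K)) : SigmaCompactSpace X :=
  ⟨⟨fun n => f ⁻¹' compactCovering Y n, fun n => hf _ (isCompact_compactCovering Y n), by
    rw [← preimage_iUnion, iUnion_compactCovering, preimage_univ]⟩⟩

theorem statement17_general (d : ℕ) (X : Type*) [TopologicalSpace X] [PolishSpace X]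
    [MeasurableSpace X] [BorelSpace X]
    (Γ : X → (Fin d → ℝ)) (hΓcont : Continuous Γ)
    (hΓproper : ∀ K : Set (Fin d → ℝ), IsCompact K → IsCompact (Γ ⁻¹' K))
    (ν : Measure (Fin d → ℝ)) [ν.Regular]
    (N : Set (Fin d → ℝ)) (hNmeas : MeasurableSet N) (hNnull : ν N = 0)
    (hinj : Set.InjOn Γ (Γ ⁻¹' N)ᶜ) :
    ∃ μ : Measure X,
      (∀ A : Set X, MeasurableSet A → μ A = ν (Γ '' A)) ∧ μ.Regular := by
  have hS : MeasurableSet (Γ ⁻¹' N)ᶜ := (hΓcont.measurable hNmeas).compl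
  have hnull : ν (Γ '' (Γ ⁻¹' N)ᶜᶜ) = 0 := by
    rw [compl_compl]
    exact measure_mono_null (image_preimage_subset Γ N) hNnull
  have : SigmaCompactSpace X := .of_isCompact_preimage hΓproper
  have : IsLocallyFiniteMeasure (ν.comapOn Γ (Γ ⁻¹' N)ᶜ) :=
    ν.isLocallyFiniteMeasure_comapOn hS hΓcont hinj
  exact ⟨ν.comapOn Γ (Γ ⁻¹' N)ᶜ,
    fun A _ => ν.comapOn_apply_eq_image hS hΓcont.continuousOn hinj hnull A, inferInstance⟩

/-- let `Γ : X → ℝ^d₊` be a continuous proper map on a Polish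
space `X`, `ν` a Radon measure on `ℝ^d` absolutely continuous w.r.t. Lebesgue
measure, and suppose `Γ` is injective outside the preimage of a `ν`-null Borel
set `N`.  Then `A ↦ ν(Γ(A))` defines a (countably additive) Borel measure on
`X` which is a Radon measure. -/
theorem statement17 (d : ℕ) (X : Type*) [TopologicalSpace X] [PolishSpace X]
    [MeasurableSpace X] [BorelSpace X]
    (Γ : X → (Fin d → ℝ)) (hΓcont : Continuous Γ)
    (hΓpos : ∀ z : X, ∀ i, 0 ≤ Γ z i)
    (hΓproper : ∀ K : Set (Fin d → ℝ), IsCompact K → IsCompact (Γ ⁻¹' K))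
    (ν : Measure (Fin d → ℝ)) [ν.Regular] (hac : ν ≪ volume)
    (N : Set (Fin d → ℝ)) (hNmeas : MeasurableSet N) (hNnull : ν N = 0)
    (hinj : Set.InjOn Γ (Γ ⁻¹' N)ᶜ) :
    ∃ μ : Measure X,
      (∀ A : Set X, MeasurableSet A → μ A = ν (Γ '' A)) ∧ μ.Regular :=
  statement17_general d X Γ hΓcont hΓproper ν N hNmeas hNnull hinj
end
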